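/- Let F(u,p,q) = ((1-u^{-1}p)(1-up)/(-p)) · ∏_{m≥1} (1-q^m)^{-8} · ∏_{m≥1, m odd} 1/( (1-u^{-2}q^m)(1-u^2 q^m)(1-up q^m)(1-u p^{-1} q^m)(1-u^{-1}p q^m)(1-u^{-1}p^{-1} q^m)(1-q^m)^2 ), viewed as a formal power series in q whose coefficients are Laurent polynomials in u and p. Then for all integers d ≥ 5, the coefficient of p^{-d} u^{1-d} q^d in F equals the coefficient of p^{-(d+1)} u^{-d} q^{d+1} in F. -/

import Mathlib

open PowerSeries
set_option maxHeartbeats 1000000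
set_option synthInstance.maxHeartbeats 400000

/-- The ring `ℚ[u^{±1}, p^{±1}]` of Laurent polynomials in `u` and `p`,
realized as the monoid algebra of `ℤ × ℤ` over `ℚ`. -/
noncomputable abbrev R : Type := AddMonoidAlgebra ℚ (ℤ × ℤ)

/-- The monomial `u^a p^b` in `ℚ[u^{±1}, p^{±1}]`. -/
noncomputable def mon (a b : ℤ) : R := AddMonoidAlgebra.single (a, b) (1 : ℚ)

/-- Inverse of a power series over `R` with constant coefficient `1`. -/
noncomputable def inv1 (f : PowerSeries R) : PowerSeries R := PowerSeries.invOfUnit f 1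

/-- Infinite product `∏_{m ≥ 1} F m`, `F m = 1 + O(q^m)`, defined coefficientwise. -/
noncomputable def iprodR (F : ℕ → PowerSeries R) : PowerSeries R :=
  PowerSeries.mk fun n => PowerSeries.coeff n (∏ m ∈ Finset.Icc 1 n, F m)

/-- The first term `T₁` of the key equation:
`((1-u⁻¹p)(1-up)/(-p)) ∏_{m≥1} (1-q^m)^{-8}`
`· ∏_{m odd} 1/((1-u⁻²qᵐ)(1-u²qᵐ)(1-up qᵐ)(1-up⁻¹qᵐ)(1-u⁻¹p qᵐ)(1-u⁻¹p⁻¹qᵐ)(1-qᵐ)²)`. -/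
noncomputable def T₁ : PowerSeries R :=
  PowerSeries.C ((1 - mon (-1) 1) * (1 - mon 1 1) * (-(mon 0 (-1))))
    * iprodR (fun m =>
        (inv1 (1 - (X : PowerSeries R) ^ m)) ^ 8
          * (if Odd m then
              inv1 (1 - PowerSeries.C (mon (-2) 0) * (X : PowerSeries R) ^ m)
                * inv1 (1 - PowerSeries.C (mon 2 0) * (X : PowerSeries R) ^ m)
                * inv1 (1 - PowerSeries.C (mon 1 1) * (X : PowerSeries R) ^ m)
                * inv1 (1 - PowerSeries.C (mon 1 (-1)) * (X : PowerSeries R) ^ m)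
                * inv1 (1 - PowerSeries.C (mon (-1) 1) * (X : PowerSeries R) ^ m)
                * inv1 (1 - PowerSeries.C (mon (-1) (-1)) * (X : PowerSeries R) ^ m)
                * (inv1 (1 - (X : PowerSeries R) ^ m)) ^ 2
            else 1))

/-- The product `∏_{m≥1} (1-u²q^{2m})(1-u⁻²q^{2m})(1-q^{2m})²
/ ((1-up q^{2m})(1-u⁻¹p⁻¹q^{2m})(1-u⁻¹p q^{2m})(1-up⁻¹ q^{2m}))` of the second term. -/
noncomputable def Pi2 : PowerSeries R :=
  iprodR (fun m =>
    (1 - PowerSeries.C (mon 2 0) * (X : PowerSeries R) ^ (2 * m))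
      * (1 - PowerSeries.C (mon (-2) 0) * (X : PowerSeries R) ^ (2 * m))
      * (1 - (X : PowerSeries R) ^ (2 * m)) ^ 2
      * inv1 (1 - PowerSeries.C (mon 1 1) * (X : PowerSeries R) ^ (2 * m))
      * inv1 (1 - PowerSeries.C (mon (-1) (-1)) * (X : PowerSeries R) ^ (2 * m))
      * inv1 (1 - PowerSeries.C (mon (-1) 1) * (X : PowerSeries R) ^ (2 * m))
      * inv1 (1 - PowerSeries.C (mon 1 (-1)) * (X : PowerSeries R) ^ (2 * m)))

noncomputable section StabAux

/-- geometric series `∑ c^k X^{mk}`. -/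
def geomS {S : Type*} [CommRing S] (c : S) (m : ℕ) : PowerSeries S :=
  PowerSeries.mk fun n => if m ∣ n then c ^ (n / m) else 0

variable {S T : Type*} [CommRing S] [CommRing T]

theorem geomS_mul (c : S) {m : ℕ} (hm : m ≠ 0) :
    (1 - PowerSeries.C c * X ^ m) * geomS c m = 1 := by
  ext n
  rw [sub_mul, one_mul, map_sub, mul_assoc, coeff_C_mul, coeff_X_pow_mul']
  rcases Nat.eq_zero_or_pos n with rfl | hn
  · simp [geomS, hm, Nat.pos_of_ne_zero hm]
  · rw [PowerSeries.coeff_one, if_neg hn.ne']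
    by_cases hle : m ≤ n
    · rw [if_pos hle]
      by_cases hdvd : m ∣ n
      · have hd2 : m ∣ n - m := (Nat.dvd_sub hdvd dvd_rfl)
        rw [geomS, coeff_mk, coeff_mk, if_pos hdvd, if_pos hd2]
        have h1 : n / m = (n - m) / m + 1 := by
          rcases hdvd with ⟨k, rfl⟩
          have hmpos := Nat.pos_of_ne_zero hm
          rcases k with _ | j
          · simp at hn
          · rw [Nat.mul_succ, Nat.add_sub_cancel, Nat.mul_add_div hmpos,
              Nat.mul_div_cancel_left _ hmpos, Nat.div_self hmpos]
        rw [h1, pow_succ]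
        ring
      · have hd2 : ¬ m ∣ n - m := by
          intro h; exact hdvd (by
            have := Nat.dvd_add h (dvd_refl m)
            rwa [Nat.sub_add_cancel hle] at this)
        rw [geomS, coeff_mk, coeff_mk, if_neg hdvd, if_neg hd2]
        ring
    · rw [if_neg hle]
      have hdvd : ¬ m ∣ n := fun h => hle (Nat.le_of_dvd hn h)
      rw [geomS, coeff_mk, if_neg hdvd]
      ring

theorem map_geomS (f : S →+* T) (c : S) (m : ℕ) :
    PowerSeries.map f (geomS c m) = geomS (f c) m := by
  ext n
  simp [geomS, PowerSeries.coeff_map, apply_ite f]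

theorem rescale_geomS (a c : S) (m : ℕ) :
    PowerSeries.rescale a (geomS c m) = geomS (a ^ m * c) m := by
  ext n
  rw [coeff_rescale, geomS, geomS, coeff_mk, coeff_mk]
  by_cases h : m ∣ n
  · rw [if_pos h, if_pos h]
    obtain ⟨k, rfl⟩ := h
    rcases Nat.eq_zero_or_pos m with rfl | hm
    · simp
    · rw [Nat.mul_div_cancel_left _ hm, mul_pow, ← pow_mul]
  · rw [if_neg h, if_neg h, mul_zero]

theorem geomS_zero {m : ℕ} (hm : m ≠ 0) : geomS (0 : S) m = 1 := by
  ext n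
  rw [geomS, coeff_mk, PowerSeries.coeff_one]
  rcases Nat.eq_zero_or_pos n with rfl | hn
  · simp
  · rw [if_neg hn.ne']
    by_cases h : m ∣ n
    · rw [if_pos h, zero_pow (Nat.div_ne_zero_iff.2 ⟨hm, Nat.le_of_dvd hn h⟩)]
    · rw [if_neg h]

theorem geomS_sq (c : S) (h : c * c = 0) :
    geomS c 1 = 1 + PowerSeries.C c * X := by
  ext n
  rw [geomS, coeff_mk, map_add, PowerSeries.coeff_one]
  match n with
  | 0 => simp
  | 1 => simp
  | (k+2) =>
    rw [if_pos (one_dvd _), Nat.div_one, if_neg (by omega)]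
    have : c ^ (k + 2) = 0 := by
      rw [pow_add, pow_two, h, mul_zero]
    rw [this, zero_add]
    simp [PowerSeries.coeff_C_mul, PowerSeries.coeff_X]


/-- generic infinite product, coefficientwise. -/
def iprod {S : Type*} [CommRing S] (F : ℕ → PowerSeries S) : PowerSeries S :=
  PowerSeries.mk fun n => PowerSeries.coeff n (∏ m ∈ Finset.Icc 1 n, F m)

variable {S T : Type*} [CommRing S] [CommRing T]

theorem iprodR_eq_iprod (F : ℕ → PowerSeries R) : iprodR F = iprod F := rfl

theorem iprod_congr {F G : ℕ → PowerSeries S} (h : ∀ m, 1 ≤ m → F m = G m) :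
    iprod F = iprod G := by
  ext n
  rw [iprod, iprod, coeff_mk, coeff_mk]
  exact congrArg _ (Finset.prod_congr rfl fun m hm => h m (Finset.mem_Icc.mp hm).1)

theorem map_iprod (f : S →+* T) (F : ℕ → PowerSeries S) :
    PowerSeries.map f (iprod F) = iprod fun m => PowerSeries.map f (F m) := by
  ext n
  rw [PowerSeries.coeff_map, iprod, iprod, coeff_mk, coeff_mk, ← PowerSeries.coeff_map,
    map_prod]

theorem rescale_iprod (a : S) (F : ℕ → PowerSeries S) :
    PowerSeries.rescale a (iprod F) = iprod fun m => PowerSeries.rescale a (F m) := by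
  ext n
  rw [coeff_rescale, iprod, iprod, coeff_mk, coeff_mk, ← coeff_rescale, map_prod]

theorem iprod_eq_first {F : ℕ → PowerSeries S} (h1 : PowerSeries.constantCoeff (F 1) = 1)
    (h : ∀ m, 2 ≤ m → F m = 1) : iprod F = F 1 := by
  ext n
  rw [iprod, coeff_mk]
  rcases Nat.eq_zero_or_pos n with rfl | hn
  · simp [h1]
  · congr 1
    rw [Finset.prod_eq_single_of_mem 1 (Finset.mem_Icc.mpr ⟨le_refl 1, hn⟩)]
    intro b hb hb1
    exact h b (by rcases Finset.mem_Icc.mp hb with ⟨h1b, _⟩; omega)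

theorem inv1_geomS (c : R) {m : ℕ} (hm : m ≠ 0) :
    inv1 (1 - PowerSeries.C c * X ^ m) = geomS c m := by
  have h1 : PowerSeries.constantCoeff (1 - PowerSeries.C c * X ^ m) = ((1 : Rˣ) : R) := by
    simp [zero_pow hm]
  have h2 := PowerSeries.mul_invOfUnit _ 1 h1
  have h3 : geomS c m * ((1 - PowerSeries.C c * X ^ m) * invOfUnit (1 - PowerSeries.C c * X ^ m) 1)
      = geomS c m := by rw [h2, mul_one]
  rw [← mul_assoc, mul_comm (geomS c m) (1 - PowerSeries.C c * X ^ m),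
    geomS_mul c hm, one_mul] at h3
  rw [inv1]
  exact h3

theorem inv1_geomS' {m : ℕ} (hm : m ≠ 0) :
    inv1 (1 - (X : PowerSeries R) ^ m) = geomS 1 m := by
  rw [← inv1_geomS 1 hm, map_one, one_mul]

section Homs
open TrivSqZeroExt DualNumber

/-- Laurent polynomials in `u`. -/
abbrev A' : Type := AddMonoidAlgebra ℚ ℤ
/-- Dual numbers over `A'`. -/
abbrev D' : Type := DualNumber A'
/-- Polynomials in `p`, Laurent in `u`. -/
abbrev R' : Type := AddMonoidAlgebra ℚ (ℤ × ℕ)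

/-- monomial `u^a` in `A'`. -/
def mA (a : ℤ) : A' := AddMonoidAlgebra.single a (1 : ℚ)
/-- monomial `u^a p^b` in `R'`. -/
def monp (a : ℤ) (b : ℕ) : R' := AddMonoidAlgebra.single (a, b) (1 : ℚ)

/-- The embedding `ℤ × ℕ →+ ℤ × ℤ`. -/
def embZN : ℤ × ℕ →+ ℤ × ℤ := (AddMonoidHom.id ℤ).prodMap (Nat.castAddMonoidHom ℤ)

lemma embZN_inj : Function.Injective embZN := by
  intro x y h
  have : (x.1, (x.2 : ℤ)) = (y.1, (y.2 : ℤ)) := h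
  rw [Prod.ext_iff] at this ⊢
  simp only [] at this
  exact ⟨this.1, by exact_mod_cast this.2⟩

/-- inclusion `R' →+* R`. -/
noncomputable def ι : R' →+* R := AddMonoidAlgebra.mapDomainRingHom ℚ embZN

lemma ι_monp (a : ℤ) (b : ℕ) : ι (monp a b) = mon a b := by
  rw [ι, monp, AddMonoidAlgebra.mapDomainRingHom_apply, AddMonoidAlgebra.mapDomain_single]
  rfl

lemma ι_apply_point (x : R') (a : ℤ) (b : ℕ) : (ι x).coeff (a, (b : ℤ)) = x.coeff (a, b) :=
  Finsupp.mapDomain_apply embZN_inj x.coeff (a, b)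

lemma eps_pow_eq_zero {b : ℕ} (hb : 2 ≤ b) : (ε : D') ^ b = 0 := by
  obtain ⟨k, rfl⟩ : ∃ k, b = k + 2 := ⟨b - 2, by omega⟩
  rw [pow_succ, pow_succ, mul_assoc, eps_mul_eps, mul_zero]

/-- the monoid hom `(ℤ × ℕ) → D'`, `(a,b) ↦ u^a ε^b`. -/
noncomputable def Fmon : Multiplicative (ℤ × ℕ) →* D' where
  toFun v := inl (mA (Multiplicative.toAdd v).1) * (ε : D') ^ (Multiplicative.toAdd v).2
  map_one' := by
    show inl (mA 0) * (ε : D') ^ 0 = 1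
    rw [pow_zero, mul_one, mA, show AddMonoidAlgebra.single (0:ℤ) (1:ℚ) = (1 : A') from
      (AddMonoidAlgebra.one_def).symm, inl_one]
  map_mul' x y := by
    show inl (mA ((Multiplicative.toAdd x).1 + (Multiplicative.toAdd y).1)) *
        (ε : D') ^ ((Multiplicative.toAdd x).2 + (Multiplicative.toAdd y).2) = _
    have h : mA ((Multiplicative.toAdd x).1 + (Multiplicative.toAdd y).1)
        = mA (Multiplicative.toAdd x).1 * mA (Multiplicative.toAdd y).1 := by
      rw [mA, mA, mA, AddMonoidAlgebra.single_mul_single, one_mul]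
    rw [h, ← inl_mul_inl, pow_add]
    ring

/-- the algebra hom `R' → D'`. -/
noncomputable def Ψ : R' →ₐ[ℚ] D' := AddMonoidAlgebra.lift ℚ D' (ℤ × ℕ) Fmon

lemma Psi_monp (a : ℤ) (b : ℕ) : Ψ (monp a b) = inl (mA a) * (ε : D') ^ b := by
  rw [monp]
  show (AddMonoidAlgebra.lift ℚ D' (ℤ × ℕ) Fmon) (AddMonoidAlgebra.single (a,b) (1:ℚ)) = _
  rw [AddMonoidAlgebra.lift_single, one_smul]
  rfl

lemma snd_inl_mul_eps (c : A') : (inl c * (ε : D')).snd = c := by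
  rw [DualNumber.snd_mul, fst_inl, snd_inl, snd_eps, fst_eps, mul_one, zero_mul, add_zero]

lemma Psi_snd (x : R') (a : ℤ) : (Ψ x).snd.coeff a = x.coeff (a, 1) := by
  induction x using AddMonoidAlgebra.induction_linear with
  | zero => simp
  | add f g hf hg =>
    rw [map_add, snd_add, AddMonoidAlgebra.coeff_add, AddMonoidAlgebra.coeff_add,
      Finsupp.add_apply, Finsupp.add_apply, hf, hg]
  | single v r =>
    obtain ⟨a', b'⟩ := v
    have hps : Ψ (AddMonoidAlgebra.single (a', b') r) = r • (inl (mA a') * (ε : D') ^ b') := by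
      show (AddMonoidAlgebra.lift ℚ D' (ℤ × ℕ) Fmon) (AddMonoidAlgebra.single (a',b') r) = _
      rw [AddMonoidAlgebra.lift_single]
      rfl
    rw [hps, snd_smul]
    match b' with
    | 0 =>
      rw [pow_zero, mul_one, snd_inl, smul_zero]
      simp [AddMonoidAlgebra.coeff_single, Finsupp.single_apply, Prod.ext_iff]
    | 1 =>
      rw [pow_one, snd_inl_mul_eps, mA]
      rw [AddMonoidAlgebra.coeff_smul, AddMonoidAlgebra.coeff_single, AddMonoidAlgebra.coeff_single,
        Finsupp.smul_apply, Finsupp.single_apply, Finsupp.single_apply]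
      by_cases h : a' = a
      · subst h; simp
      · simp [h, Prod.ext_iff]
    | (k+2) =>
      rw [eps_pow_eq_zero (by omega), mul_zero, snd_zero, smul_zero]
      have : ((a', k+2) : ℤ × ℕ) ≠ (a, 1) := by simp [Prod.ext_iff]
      simp [AddMonoidAlgebra.coeff_single, Finsupp.single_apply, this]

end Homs

section Claim1

/-- explicit factors over `R'`. -/
noncomputable def F' : ℕ → PowerSeries R' := fun m =>
  (geomS (monp 0 m) m) ^ 8 *
    (if Odd m then
        geomS (monp (-2) m) m * geomS (monp 2 m) m * geomS (monp 1 (m+1)) m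
          * geomS (monp 1 (m-1)) m * geomS (monp (-1) (m+1)) m * geomS (monp (-1) (m-1)) m
          * (geomS (monp 0 m) m) ^ 2
      else 1)

/-- explicit model of `p·q^{shift}·T₁` over `R'`. -/
noncomputable def U' : PowerSeries R' :=
  PowerSeries.C (-((1 - monp (-1) 1) * (1 - monp 1 1))) * iprod F'

lemma rescale_C' {S : Type*} [CommRing S] (a r : S) :
    PowerSeries.rescale a (PowerSeries.C r) = PowerSeries.C r := by
  ext n
  rw [coeff_rescale]
  rw [PowerSeries.coeff_C]
  rcases Nat.eq_zero_or_pos n with rfl | hn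
  · simp
  · rw [if_neg hn.ne', mul_zero]

lemma mon_zero_pow (m : ℕ) : (mon 0 1 : R) ^ m = mon 0 (m : ℤ) := by
  rw [mon, AddMonoidAlgebra.single_pow, one_pow, mon]
  norm_num

lemma mon_mul_mon (a b a' b' : ℤ) : mon a b * mon a' b' = mon (a + a') (b + b') := by
  rw [mon, mon, AddMonoidAlgebra.single_mul_single, one_mul, mon]
  rfl

lemma resc_param (a b : ℤ) (m : ℕ) : (mon 0 1 : R) ^ m * mon a b = mon a (b + m) := by
  rw [mon_zero_pow, mon_mul_mon, zero_add, add_comm]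

theorem map_ι_U' :
    PowerSeries.map ι U' = PowerSeries.C (mon 0 1) * PowerSeries.rescale (mon 0 1) T₁ := by
  rw [T₁, U', iprodR_eq_iprod]
  rw [map_mul, map_mul, rescale_C', rescale_iprod, map_iprod, PowerSeries.map_C,
    ← mul_assoc, ← map_mul (PowerSeries.C (R := R))]
  congr 1
  · -- constants
    congr 1
    rw [map_neg, map_mul, map_sub, map_sub, map_one, ι_monp, ι_monp]
    have hpq : (mon 0 1 : R) * mon 0 (-1) = 1 := by
      rw [mon_mul_mon]
      norm_num [mon]
      exact (AddMonoidAlgebra.one_def).symm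
    push_cast
    linear_combination ((1 - mon (-1) 1) * (1 - mon 1 1)) * hpq
  · -- factors
    apply iprod_congr
    intro m hm
    have hm0 : m ≠ 0 := by omega
    rw [F', inv1_geomS' hm0]
    by_cases ho : Odd m
    · rw [if_pos ho, if_pos ho,
        inv1_geomS (mon (-2) 0) hm0, inv1_geomS (mon 2 0) hm0, inv1_geomS (mon 1 1) hm0,
        inv1_geomS (mon 1 (-1)) hm0, inv1_geomS (mon (-1) 1) hm0, inv1_geomS (mon (-1) (-1)) hm0]
      simp only [map_mul, map_pow, map_geomS, rescale_geomS, ι_monp, mul_one,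
        mon_zero_pow, mon_mul_mon, zero_add, add_zero]
      have c1 : mon 1 (((m+1 : ℕ)) : ℤ) = mon 1 ((m : ℤ) + 1) := congrArg (mon 1) (by omega)
      have c2 : mon 1 (((m-1 : ℕ)) : ℤ) = mon 1 ((m : ℤ) + -1) := congrArg (mon 1) (by omega)
      have c3 : mon (-1) (((m+1 : ℕ)) : ℤ) = mon (-1) ((m : ℤ) + 1) :=
        congrArg (mon (-1)) (by omega)
      have c4 : mon (-1) (((m-1 : ℕ)) : ℤ) = mon (-1) ((m : ℤ) + -1) :=
        congrArg (mon (-1)) (by omega)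
      rw [c1, c2, c3, c4]
    · rw [if_neg ho, if_neg ho]
      simp only [map_mul, map_pow, map_geomS, rescale_geomS, ι_monp, mul_one, mon_zero_pow,
        map_one]

end Claim1

section Claim2
open TrivSqZeroExt DualNumber

lemma one_add_C_mul {S : Type*} [CommRing S] (e f : S) (h : e * f = 0) :
    (1 + PowerSeries.C e * X) * (1 + PowerSeries.C f * X)
      = 1 + PowerSeries.C (e + f) * X := by
  have h2 : PowerSeries.C e * PowerSeries.C f = 0 := by rw [← map_mul, h, map_zero]
  calc (1 + PowerSeries.C e * X) * (1 + PowerSeries.C f * X)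
      = 1 + (PowerSeries.C e + PowerSeries.C f) * X
          + (PowerSeries.C e * PowerSeries.C f) * (X * X) := by ring
    _ = 1 + PowerSeries.C (e + f) * X := by
        rw [h2, zero_mul, add_zero, map_add]

lemma one_add_C_pow {S : Type*} [CommRing S] (e : S) (h : e * e = 0) (k : ℕ) :
    (1 + PowerSeries.C e * X) ^ k = 1 + PowerSeries.C (k • e) * X := by
  induction k with
  | zero => rw [pow_zero, zero_smul, map_zero, zero_mul, add_zero]
  | succ k ih =>
    rw [pow_succ, ih, one_add_C_mul _ _ (by rw [smul_mul_assoc, h, smul_zero]),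
      ← succ_nsmul]

lemma sq_inl_eps (c d : A') : (inl c * (ε : D')) * (inl d * (ε : D')) = 0 := by
  calc (inl c * (ε : D')) * (inl d * (ε : D')) = inl c * inl d * (ε * ε) := by ring
    _ = 0 := by rw [eps_mul_eps, mul_zero]

lemma comb (a b : A') :
    (1 + PowerSeries.C (inl a * ε) * X) * (1 + PowerSeries.C (inl b * ε) * X)
      = 1 + PowerSeries.C (inl (a + b) * ε) * X := by
  rw [one_add_C_mul _ _ (sq_inl_eps a b), inl_add, add_mul]

lemma constCoeff_geomS {S : Type*} [CommRing S] (c : S) (m : ℕ) :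
    PowerSeries.constantCoeff (geomS c m) = 1 := by
  rw [← PowerSeries.coeff_zero_eq_constantCoeff_apply, geomS, coeff_mk]
  simp

/-- the two surviving geometric series. -/
noncomputable def γγ : PowerSeries D' :=
  geomS (inl (mA 1)) 1 * geomS (inl (mA (-1))) 1

/-- `u + u⁻¹`. -/
noncomputable def tA : A' := mA 1 + mA (-1)
/-- `u² + u⁻² + 10`. -/
noncomputable def cA : A' := mA 2 + mA (-2) + 10

lemma mA_zero : mA 0 = 1 := by rw [mA]; exact (AddMonoidAlgebra.one_def).symm

lemma rearr1 {S : Type*} [CommRing S] (a b c d g1 g2 : S) :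
    a * (b * c * 1 * g1 * 1 * g2 * d) = (a * b) * (c * d) * (g1 * g2) := by ring

lemma combineAll {S : Type*} [CommRing S] (e a b : S) (g1 g2 : PowerSeries S)
    (he : e * e = 0) (hea : e * a = 0) (heb : e * b = 0) (hab : a * b = 0) :
    (1 + PowerSeries.C e * X) ^ 8 * ((1 + PowerSeries.C a * X) * (1 + PowerSeries.C b * X)
      * 1 * g1 * 1 * g2 * (1 + PowerSeries.C e * X) ^ 2)
    = (1 + PowerSeries.C ((10:ℕ) • e + a + b) * X) * (g1 * g2) := by
  have z1 : (8:ℕ) • e * a = 0 := by linear_combination (8:S) * hea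
  have z2 : b * ((2:ℕ) • e) = 0 := by linear_combination (2:S) * heb
  have z3 : ((8:ℕ) • e + a) * (b + (2:ℕ) • e) = 0 := by
    linear_combination (8:S) * heb + (16:S) * he + hab + (2:S) * hea
  calc (1 + PowerSeries.C e * X) ^ 8 * ((1 + PowerSeries.C a * X) * (1 + PowerSeries.C b * X)
      * 1 * g1 * 1 * g2 * (1 + PowerSeries.C e * X) ^ 2)
      = ((1 + PowerSeries.C ((8:ℕ) • e) * X) * (1 + PowerSeries.C a * X)) *
        ((1 + PowerSeries.C b * X) * (1 + PowerSeries.C ((2:ℕ) • e) * X)) * (g1 * g2) := by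
        rw [one_add_C_pow e he 8, one_add_C_pow e he 2]; exact rearr1 _ _ _ _ _ _
    _ = (1 + PowerSeries.C ((8:ℕ) • e + a) * X) * (1 + PowerSeries.C (b + (2:ℕ) • e) * X)
          * (g1 * g2) := by rw [one_add_C_mul _ _ z1, one_add_C_mul _ _ z2]
    _ = (1 + PowerSeries.C (((8:ℕ) • e + a) + (b + (2:ℕ) • e)) * X) * (g1 * g2) := by
          rw [one_add_C_mul _ _ z3]
    _ = (1 + PowerSeries.C ((10:ℕ) • e + a + b) * X) * (g1 * g2) := by
          rw [show ((8:ℕ) • e + a) + (b + (2:ℕ) • e) = (10:ℕ) • e + a + b from by ring]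

lemma eps_mul_inl_eps (c : A') : (ε : D') * (inl c * ε) = 0 := by
  calc (ε : D') * (inl c * ε) = inl c * (ε * ε) := by ring
    _ = 0 := by rw [eps_mul_eps, mul_zero]

lemma map_Psi_F'_one :
    PowerSeries.map Ψ.toRingHom (F' 1)
      = (1 + PowerSeries.C (inl cA * ε) * X) * γγ := by
  rw [F', if_pos odd_one]
  have psirh : ∀ x : R', Ψ.toRingHom x = Ψ x := fun _ => rfl
  conv_lhs => simp only [map_mul, map_pow, map_geomS, psirh, Psi_monp]
  have hmA0 : inl (mA 0) * (ε:D')^1 = ε := by rw [pow_one, mA_zero, inl_one, one_mul]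
  have h2 : ∀ a : ℤ, inl (mA a) * (ε:D')^(1+1) = 0 := fun a => by
    rw [show (1+1 : ℕ) = 2 from rfl, eps_pow_eq_zero le_rfl, mul_zero]
  have h0 : ∀ a : ℤ, inl (mA a) * (ε:D')^(1-1) = inl (mA a) := fun a => by
    rw [show (1-1 : ℕ) = 0 from rfl, pow_zero, mul_one]
  rw [hmA0, h2, h2, h0, h0, geomS_zero one_ne_zero]
  rw [pow_one, geomS_sq _ eps_mul_eps, geomS_sq _ (sq_inl_eps (mA (-2)) (mA (-2))),
    geomS_sq _ (sq_inl_eps (mA 2) (mA 2))]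
  rw [combineAll _ _ _ _ _ eps_mul_eps (eps_mul_inl_eps _) (eps_mul_inl_eps _)
    (sq_inl_eps _ _)]
  rw [show (10:ℕ) • (ε:D') + inl (mA (-2)) * ε + inl (mA 2) * ε = inl cA * ε from by
    rw [nsmul_eq_mul, ← inl_natCast (M := A'), ← add_mul, ← add_mul, ← inl_add, ← inl_add,
      show (((10:ℕ):A') + mA (-2) + mA 2 : A') = cA from by rw [cA]; push_cast; ring],
    γγ]

lemma map_Psi_F'_ge (m : ℕ) (hm : 2 ≤ m) : PowerSeries.map Ψ.toRingHom (F' m) = 1 := by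
  have psirh : ∀ x : R', Ψ.toRingHom x = Ψ x := fun _ => rfl
  have hm0 : m ≠ 0 := by omega
  rw [F']
  by_cases ho : Odd m
  · have hm3 : 3 ≤ m := by
      obtain ⟨k, rfl⟩ := ho; omega
    have z1 : (ε:D')^m = 0 := eps_pow_eq_zero (by omega)
    have z2 : (ε:D')^(m+1) = 0 := eps_pow_eq_zero (by omega)
    have z3 : (ε:D')^(m-1) = 0 := eps_pow_eq_zero (by omega)
    rw [if_pos ho]
    simp only [map_mul, map_pow, map_geomS, psirh, Psi_monp, z1, z2, z3, mul_zero,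
      geomS_zero hm0, one_pow, mul_one, one_mul]
  · have z1 : (ε:D')^m = 0 := eps_pow_eq_zero (by omega)
    rw [if_neg ho]
    simp only [map_mul, map_pow, map_geomS, psirh, Psi_monp, z1, mul_zero,
      geomS_zero hm0, one_pow, mul_one]

theorem map_Psi_U' :
    PowerSeries.map Ψ.toRingHom U'
      = PowerSeries.C (-1 + inl tA * ε)
          * ((1 + PowerSeries.C (inl cA * ε) * X) * γγ) := by
  rw [U', map_mul, PowerSeries.map_C, map_iprod]
  have hfac : iprod (fun m => PowerSeries.map Ψ.toRingHom (F' m))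
      = (1 + PowerSeries.C (inl cA * ε) * X) * γγ := by
    rw [iprod_eq_first (F := fun m => PowerSeries.map Ψ.toRingHom (F' m))
      (by show PowerSeries.constantCoeff (PowerSeries.map Ψ.toRingHom (F' 1)) = 1
          rw [map_Psi_F'_one, γγ]; simp only [map_mul, map_add, map_one]
          rw [constCoeff_geomS, constCoeff_geomS]; simp)
      map_Psi_F'_ge, map_Psi_F'_one]
  rw [hfac]
  have psirh : ∀ x : R', Ψ.toRingHom x = Ψ x := fun _ => rfl
  have hc0 : Ψ.toRingHom (-((1 - monp (-1) 1) * (1 - monp 1 1))) = -1 + inl tA * ε := by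
    rw [psirh, map_neg, map_mul, map_sub, map_sub, map_one, Psi_monp, Psi_monp, pow_one]
    have ht : inl tA * (ε:D') = inl (mA 1) * ε + inl (mA (-1)) * ε := by
      rw [tA, inl_add, add_mul]
    rw [ht]
    linear_combination (-1 : D') * sq_inl_eps (mA (-1)) (mA 1)
  rw [hc0]

end Claim2



section Final
open TrivSqZeroExt DualNumber

/-- `∑_{i+j=n} u^{i-j}`. -/
noncomputable def SS (n : ℕ) : A' :=
  ∑ x ∈ Finset.HasAntidiagonal.antidiagonal n, AddMonoidAlgebra.single ((x.1 : ℤ) - x.2) (1 : ℚ)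

lemma coeff_γγ (n : ℕ) : PowerSeries.coeff n γγ = inl (SS n) := by
  rw [γγ, PowerSeries.coeff_mul]
  have hc : ∀ (c : A') (k : ℕ), PowerSeries.coeff k (geomS (inl c : D') 1) = (inl (c ^ k) : D') :=
    fun c k => by rw [geomS, coeff_mk, if_pos (one_dvd k), Nat.div_one, inl_pow]
  have hm : ∀ i j : ℕ, (mA 1) ^ i * (mA (-1)) ^ j
      = AddMonoidAlgebra.single ((i : ℤ) - j) (1 : ℚ) := by
    intro i j
    rw [mA, mA, AddMonoidAlgebra.single_pow, AddMonoidAlgebra.single_pow,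
      AddMonoidAlgebra.single_mul_single, one_pow, one_pow, one_mul]
    congr 1
    simp only [nsmul_eq_mul, mul_one, mul_neg]
    ring
  calc ∑ x ∈ Finset.HasAntidiagonal.antidiagonal n,
        PowerSeries.coeff x.1 (geomS (inl (mA 1)) 1)
          * PowerSeries.coeff x.2 (geomS (inl (mA (-1))) 1)
      = ∑ x ∈ Finset.HasAntidiagonal.antidiagonal n,
          TrivSqZeroExt.inlHom A' A' (AddMonoidAlgebra.single ((x.1 : ℤ) - x.2) (1 : ℚ)) :=
        Finset.sum_congr rfl (fun x _ => by rw [hc, hc, inl_mul_inl, hm]; rfl)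
    _ = inl (SS n) := by rw [← map_sum, SS]; rfl

lemma SS_apply (n : ℕ) (w : ℤ) :
    (SS n).coeff w = ∑ i ∈ Finset.range (n+1), (if 2*(i:ℤ) = w + n then (1:ℚ) else 0) := by
  rw [SS, Finset.Nat.sum_antidiagonal_eq_sum_range_succ_mk, AddMonoidAlgebra.coeff_sum,
    Finsupp.finset_sum_apply]
  apply Finset.sum_congr rfl
  intro i hi
  have hin : i ≤ n := Finset.mem_range_succ_iff.mp hi
  rw [AddMonoidAlgebra.coeff_single, Finsupp.single_apply]
  have : ((i:ℤ) - (n - i : ℕ) = w) ↔ (2*(i:ℤ) = w + n) := by omega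
  simp only [this]

lemma SS_at (n : ℕ) (w : ℤ) (i₀ : ℕ) (h : 2*(i₀:ℤ) = w + n) (hle : i₀ ≤ n) : (SS n).coeff w = 1 := by
  rw [SS_apply]
  rw [Finset.sum_congr rfl (fun i hi => show _ = if i = i₀ then (1:ℚ) else 0 from by
    have := Finset.mem_range.mp hi
    exact if_congr (by omega) rfl rfl)]
  rw [Finset.sum_ite_eq' (Finset.range (n+1)) i₀ fun _ => (1:ℚ),
    if_pos (Finset.mem_range.mpr (by omega))]

lemma SS_zero (n : ℕ) (w : ℤ) (h : ∀ i : ℕ, i ≤ n → 2*(i:ℤ) ≠ w + n) : (SS n).coeff w = 0 := by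
  rw [SS_apply]
  apply Finset.sum_eq_zero
  intro i hi
  exact if_neg (h i (Finset.mem_range_succ_iff.mp hi))

theorem key (d : ℕ) (hd : 2 ≤ d) :
    (PowerSeries.coeff d T₁).coeff (1 - (d : ℤ), -(d : ℤ)) = -9 := by
  obtain ⟨e, rfl⟩ : ∃ e, d = e + 2 := ⟨d - 2, by omega⟩
  have hA : (PowerSeries.coeff (e+2)
        (PowerSeries.C (mon 0 1) * PowerSeries.rescale (mon 0 1) T₁)).coeff (1 - ((e+2:ℕ) : ℤ), 1)
      = (PowerSeries.coeff (e+2) T₁).coeff (1 - ((e+2:ℕ) : ℤ), -((e+2:ℕ) : ℤ)) := by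
    rw [PowerSeries.coeff_C_mul, coeff_rescale, ← mul_assoc, mon_zero_pow, mon_mul_mon, mon]
    rw [AddMonoidAlgebra.coeff_single_mul_apply, one_mul]
    congr 1
    simp only [Prod.mk_add_mk, Prod.neg_mk, Prod.mk.injEq]
    constructor <;> omega
  rw [← hA, map_ι_U'.symm, PowerSeries.coeff_map]
  have hB : (ι (PowerSeries.coeff (e+2) U')).coeff (1 - ((e+2:ℕ) : ℤ), 1)
      = (PowerSeries.coeff (e+2) U').coeff (1 - ((e+2:ℕ) : ℤ), 1) := by
    have := ι_apply_point (PowerSeries.coeff (e+2) U') (1 - ((e+2:ℕ) : ℤ)) 1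
    rw [Nat.cast_one] at this
    exact this
  rw [hB, ← Psi_snd]
  have hC : Ψ (PowerSeries.coeff (e+2) U')
      = PowerSeries.coeff (e+2) (PowerSeries.map Ψ.toRingHom U') := by
    rw [PowerSeries.coeff_map]; rfl
  rw [hC, map_Psi_U']
  have hsplit : (1 + PowerSeries.C (inl cA * ε) * X) * γγ
      = γγ + PowerSeries.C (inl cA * ε) * (X * γγ) := by ring
  rw [PowerSeries.coeff_C_mul, hsplit, map_add, PowerSeries.coeff_C_mul,
    show e + 2 = (e+1)+1 from rfl, PowerSeries.coeff_succ_X_mul, coeff_γγ, coeff_γγ]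
  have hy : inl cA * (ε : D') * inl (SS (e+1)) = inl (cA * SS (e+1)) * ε := by
    rw [← inl_mul_inl]; ring
  rw [hy]
  simp only [DualNumber.snd_mul, TrivSqZeroExt.fst_add, TrivSqZeroExt.fst_neg,
    TrivSqZeroExt.fst_one, TrivSqZeroExt.fst_mul, TrivSqZeroExt.fst_inl, DualNumber.fst_eps,
    TrivSqZeroExt.snd_add, TrivSqZeroExt.snd_neg, TrivSqZeroExt.snd_one, TrivSqZeroExt.snd_inl,
    DualNumber.snd_eps, mul_zero, zero_mul, mul_one, one_mul, add_zero, zero_add, neg_zero,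
    neg_mul]
  rw [tA, cA]
  simp only [add_mul]
  have h10 : (10 : A') = AddMonoidAlgebra.single (0:ℤ) (10:ℚ) := by
    rw [show (10:A') = ((10:ℕ):A') from by norm_num, AddMonoidAlgebra.natCast_def]
    norm_num
  rw [h10, mA, mA, mA, mA]
  simp only [AddMonoidAlgebra.coeff_add, AddMonoidAlgebra.coeff_neg, Finsupp.add_apply,
    Finsupp.neg_apply, AddMonoidAlgebra.coeff_single_mul_apply]
  simp only [one_mul]
  rw [SS_zero (e+1) _ (by intro i hi; push_cast; omega),
    SS_at (e+1) _ 1 (by push_cast; ring) (by omega),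
    SS_at (e+1) _ 0 (by push_cast; ring) (by omega),
    SS_at (e+2) _ 0 (by push_cast; ring) (by omega),
    SS_at (e+2) _ 1 (by push_cast; ring) (by omega)]
  norm_num

end Final

end StabAux

/-- Stabilization: for all `d ≥ 5`, the coefficient of `p^{-d} u^{1-d} q^d` in
`F = T₁` equals the coefficient of `p^{-(d+1)} u^{-d} q^{d+1}`. (Here an element of
`R = ℚ[u^{±1},p^{±1}]` is evaluated at `(a,b) ∈ ℤ × ℤ` to extract the coefficient
of `u^a p^b`.) -/
theorem statement12 :
    ∀ d : ℕ, 5 ≤ d →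
      (PowerSeries.coeff d T₁).coeff (1 - (d : ℤ), -(d : ℤ))
        = (PowerSeries.coeff (d + 1) T₁).coeff (-(d : ℤ), -((d : ℤ) + 1)) := by
  intro d hd
  rw [key d (by omega)]
  have h2 := key (d+1) (by omega)
  rw [show ((-(d:ℤ)), (-((d:ℤ)+1))) = (1 - ((d+1:ℕ) : ℤ), -((d+1:ℕ) : ℤ)) from by
    simp only [Prod.mk.injEq]; constructor <;> push_cast <;> ring]
  rw [h2]
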